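/- A chamber system X over a right-angled Coxeter group (W,Γ) is a building if and only if: (a) every ∼_γ-class has at least two elements; (b) any two elements of X are connected by a path; (c) for commuting generators γ,δ, if x and y are connected by a path of type γδ then they are connected by a path of type δγ; and (d) there is no non-trivial closed reduced path. -/

import Mathlib

variable {Γ : Type*} {X : Type*}

/-- Two generators commute: they are distinct and non-adjacent in the Coxeter graph. -/
def RACommutes (adj : Γ → Γ → Prop) (γ δ : Γ) : Prop := γ ≠ δ ∧ ¬ adj γ δ

/-- Relations of the right-angled Coxeter group: squares of generators and
commutators of commuting (non-adjacent) pairs. -/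
def coxRels (adj : Γ → Γ → Prop) : Set (FreeGroup Γ) :=
  {r | (∃ γ : Γ, r = FreeGroup.of γ * FreeGroup.of γ) ∨
    (∃ γ δ : Γ, RACommutes adj γ δ ∧
      r = FreeGroup.of γ * FreeGroup.of δ * (FreeGroup.of γ)⁻¹ * (FreeGroup.of δ)⁻¹)}

/-- The element of the right-angled Coxeter group represented by a word. -/
def evalWord (adj : Γ → Γ → Prop) (w : List Γ) : PresentedGroup (coxRels adj) :=
  (w.map (fun γ => (PresentedGroup.of γ : PresentedGroup (coxRels adj)))).prod

/-- One swap of two adjacent commuting generators. -/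
def SwapStep (adj : Γ → Γ → Prop) (w w' : List Γ) : Prop :=
  ∃ (u v : List Γ) (γ δ : Γ), RACommutes adj γ δ ∧
    w = u ++ γ :: δ :: v ∧ w' = u ++ δ :: γ :: v

/-- A word is reduced iff there is no pair of equal letters such that the letter
commutes with every letter strictly in between. -/
def GIsReduced (adj : Γ → Γ → Prop) (w : List Γ) : Prop :=
  ¬ ∃ (u v x : List Γ) (γ : Γ), w = u ++ γ :: (v ++ γ :: x) ∧
      ∀ δ ∈ v, RACommutes adj γ δ

/-- `IsPath rel w x y`: there is a path of type `w` from `x` to `y` in the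
chamber system, i.e. consecutive chambers are distinct and `∼_γᵢ`-related. -/
def IsPath (rel : Γ → X → X → Prop) : List Γ → X → X → Prop
  | [], x, y => x = y
  | γ :: w, x, y => ∃ z, x ≠ z ∧ rel γ x z ∧ IsPath rel w z y

/-- `IsPathSeq rel w p`: the sequence of chambers `p` is a path of type `w`. -/
def IsPathSeq (rel : Γ → X → X → Prop) : List Γ → List X → Prop
  | [], p => ∃ x, p = [x]
  | γ :: w, p => ∃ x y q, p = x :: y :: q ∧ x ≠ y ∧ rel γ x y ∧ IsPathSeq rel w (y :: q)

/-- A chamber system is a building if every `∼_γ`-class has at least two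
elements and, for all chambers `x, y`, there is a group element `g` such that a
reduced path of type `w` from `x` to `y` exists iff `w` represents `g`. -/
def IsBuilding (adj : Γ → Γ → Prop) (rel : Γ → X → X → Prop) : Prop :=
  (∀ (γ : Γ) (x : X), ∃ y, y ≠ x ∧ rel γ x y) ∧
  ∀ x y : X, ∃ g : PresentedGroup (coxRels adj), ∀ w : List Γ,
    GIsReduced adj w → (IsPath rel w x y ↔ evalWord adj w = g)

/-!
A generator `γ` acts on swap-classes of reduced words by deleting a `γ` that can be shuffled to
the front, or else by prepending `γ`. These involutions satisfy the Coxeter relations, so the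
group acts, and evaluating on the empty word gives Tits' solution of the word problem: reduced
words with the same value differ by commuting swaps. Consequently a word is reduced iff it has
minimal length among the words with its value.

Conversely, given two reduced paths from `x` to `y`, the closed path made of one and the reverse
of the other is reduced only if both are empty; otherwise both paths can be swapped to start with
a common letter `γ`. If the two `γ`-steps end in the same chamber we induct on the tails. If not,
each tail extended by a `γ`-step from the other endpoint is a reduced path with the same ends as
the other tail, and comparing lengths gives `|b| = |b'| + 1` and `|b'| = |b| + 1`.
-/

section
variable {adj : Γ → Γ → Prop} {γ δ : Γ} {u v w w' : List Γ}

theorem RACommutes.symm (hsym : Symmetric adj) (h : RACommutes adj γ δ) : RACommutes adj δ γ :=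
  ⟨h.1.symm, fun h' => h.2 (hsym h')⟩

section Group

open PresentedGroup

@[simp]
theorem evalWord_nil : evalWord adj [] = 1 := rfl

@[simp]
theorem evalWord_cons : evalWord adj (γ :: w) = of γ * evalWord adj w := by
  simp [evalWord]

theorem evalWord_append : evalWord adj (u ++ v) = evalWord adj u * evalWord adj v := by
  simp [evalWord]

@[simp]
theorem of_mul_of_self (γ : Γ) : (of γ : PresentedGroup (coxRels adj)) * of γ = 1 :=
  one_of_mem (Or.inl ⟨γ, rfl⟩)

@[simp]
theorem of_inv (γ : Γ) : (of γ : PresentedGroup (coxRels adj))⁻¹ = of γ :=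
  inv_eq_of_mul_eq_one_right (of_mul_of_self γ)

theorem of_mul_of_comm (hc : RACommutes adj γ δ) :
    (of γ : PresentedGroup (coxRels adj)) * of δ = of δ * of γ := by
  have h : (of γ : PresentedGroup (coxRels adj)) * of δ * (of γ)⁻¹ * (of δ)⁻¹ = 1 :=
    one_of_mem (Or.inr ⟨γ, δ, hc, rfl⟩)
  calc of γ * of δ = of γ * of δ * (of γ)⁻¹ * (of δ)⁻¹ * (of δ * of γ) := by group
    _ = of δ * of γ := by rw [h, one_mul]

theorem evalWord_reverse : evalWord adj w.reverse = (evalWord adj w)⁻¹ := by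
  induction w with
  | nil => simp
  | cons γ w ih => simp [evalWord_append, ih]

theorem evalWord_surjective : Function.Surjective (evalWord adj) := by
  intro g
  have hg : g ∈ Subgroup.closure (Set.range (of : Γ → PresentedGroup (coxRels adj))) := by simp
  induction hg using Subgroup.closure_induction with
  | mem _ hγ => obtain ⟨γ, rfl⟩ := hγ; exact ⟨[γ], by simp⟩
  | one => exact ⟨[], rfl⟩
  | mul _ _ _ _ hu hv =>
    obtain ⟨u, rfl⟩ := hu
    obtain ⟨v, rfl⟩ := hv
    exact ⟨u ++ v, evalWord_append⟩
  | inv _ _ hw => obtain ⟨w, rfl⟩ := hw; exact ⟨w.reverse, evalWord_reverse⟩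

end Group

section Swap

theorem SwapStep.symm (hsym : Symmetric adj) (h : SwapStep adj w w') : SwapStep adj w' w := by
  obtain ⟨u, v, γ, δ, hc, rfl, rfl⟩ := h
  exact ⟨u, v, δ, γ, hc.symm hsym, rfl, rfl⟩

theorem SwapStep.cons (h : SwapStep adj w w') (γ : Γ) : SwapStep adj (γ :: w) (γ :: w') := by
  obtain ⟨u, v, α, β, hc, rfl, rfl⟩ := h
  exact ⟨γ :: u, v, α, β, hc, rfl, rfl⟩

theorem SwapStep.reverse (hsym : Symmetric adj) (h : SwapStep adj w w') :
    SwapStep adj w.reverse w'.reverse := by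
  obtain ⟨u, v, γ, δ, hc, rfl, rfl⟩ := h
  exact ⟨v.reverse, u.reverse, δ, γ, hc.symm hsym, by simp, by simp⟩

@[elab_as_elim]
theorem SwapStep.cons_induction {P : List Γ → List Γ → Prop} (h : SwapStep adj w w')
    (head : ∀ γ δ v, RACommutes adj γ δ → P (γ :: δ :: v) (δ :: γ :: v))
    (cons : ∀ α w w', SwapStep adj w w' → P w w' → P (α :: w) (α :: w')) : P w w' := by
  obtain ⟨u, v, γ, δ, hc, rfl, rfl⟩ := h
  induction u with
  | nil => exact head γ δ v hc
  | cons α u ih => exact cons α _ _ ⟨u, v, γ, δ, hc, rfl, rfl⟩ ih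

theorem SwapStep.length_eq (h : SwapStep adj w w') : w.length = w'.length := by
  obtain ⟨u, v, γ, δ, -, rfl, rfl⟩ := h
  simp

theorem SwapStep.evalWord_eq (h : SwapStep adj w w') : evalWord adj w = evalWord adj w' := by
  obtain ⟨u, v, γ, δ, hc, rfl, rfl⟩ := h
  simp [evalWord_append, ← mul_assoc, of_mul_of_comm hc]

abbrev SwapEquiv (adj : Γ → Γ → Prop) : List Γ → List Γ → Prop :=
  Relation.ReflTransGen (SwapStep adj)

theorem SwapEquiv.symm (hsym : Symmetric adj) (h : SwapEquiv adj w w') : SwapEquiv adj w' w :=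
  Relation.ReflTransGen.rec .refl (fun _ hs ih => .head (hs.symm hsym) ih) h

theorem SwapEquiv.cons (h : SwapEquiv adj w w') (γ : Γ) : SwapEquiv adj (γ :: w) (γ :: w') :=
  h.lift _ fun _ _ hs => hs.cons γ

theorem SwapEquiv.reverse (hsym : Symmetric adj) (h : SwapEquiv adj w w') :
    SwapEquiv adj w.reverse w'.reverse :=
  h.lift _ fun _ _ hs => hs.reverse hsym

theorem SwapEquiv.length_eq (h : SwapEquiv adj w w') : w.length = w'.length :=
  Relation.ReflTransGen.rec rfl (fun _ hs ih => ih.trans hs.length_eq) h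

theorem SwapEquiv.evalWord_eq (h : SwapEquiv adj w w') : evalWord adj w = evalWord adj w' :=
  Relation.ReflTransGen.rec rfl (fun _ hs ih => ih.trans hs.evalWord_eq) h

theorem swapEquiv_cons_concat (h : ∀ δ ∈ v, RACommutes adj γ δ) :
    SwapEquiv adj (γ :: v) (v ++ [γ]) := by
  induction v with
  | nil => rfl
  | cons δ v ih =>
    refine .head ⟨[], v, γ, δ, h δ (by simp), rfl, rfl⟩ ?_
    exact (ih fun ε hε => h ε (by simp [hε])).cons δ

end Swap

section Shuffle

def ShufflesToFront (adj : Γ → Γ → Prop) (γ : Γ) : List Γ → Prop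
  | [] => False
  | δ :: w => γ = δ ∨ RACommutes adj γ δ ∧ ShufflesToFront adj γ w

@[simp]
theorem not_shufflesToFront_nil : ¬ ShufflesToFront adj γ [] := id

theorem shufflesToFront_cons_self : ShufflesToFront adj γ (γ :: w) := .inl rfl

@[simp]
theorem shufflesToFront_cons :
    ShufflesToFront adj γ (δ :: w) ↔ γ = δ ∨ RACommutes adj γ δ ∧ ShufflesToFront adj γ w :=
  Iff.rfl

theorem shufflesToFront_iff :
    ShufflesToFront adj γ w ↔ ∃ v x, w = v ++ γ :: x ∧ ∀ δ ∈ v, RACommutes adj γ δ := by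
  induction w with
  | nil => simp
  | cons δ w ih =>
    constructor
    · rintro (rfl | ⟨hc, h⟩)
      · exact ⟨[], w, rfl, by simp⟩
      · obtain ⟨v, x, rfl, hv⟩ := ih.mp h
        exact ⟨δ :: v, x, rfl, List.forall_mem_cons.mpr ⟨hc, hv⟩⟩
    · rintro ⟨_ | ⟨ε, v⟩, x, hw, hv⟩
      · exact Or.inl (List.cons_eq_cons.mp hw).1.symm
      · obtain ⟨rfl, rfl⟩ := List.cons_eq_cons.mp hw
        simp only [List.mem_cons, forall_eq_or_imp] at hv
        exact Or.inr ⟨hv.1, ih.mpr ⟨v, x, rfl, hv.2⟩⟩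

theorem ShufflesToFront.of_append (h : ShufflesToFront adj γ (u ++ w)) :
    ShufflesToFront adj γ u ∨ (∀ δ ∈ u, RACommutes adj γ δ) ∧ ShufflesToFront adj γ w := by
  induction u with
  | nil => simpa using h
  | cons δ u ih =>
    rcases h with rfl | ⟨hc, h⟩
    · simp
    · rcases ih h with h' | ⟨hu, h'⟩
      · exact Or.inl (Or.inr ⟨hc, h'⟩)
      · exact Or.inr ⟨List.forall_mem_cons.mpr ⟨hc, hu⟩, h'⟩

theorem ShufflesToFront.swapStep (hs : SwapStep adj w w') :
    ShufflesToFront adj γ w → ShufflesToFront adj γ w' := by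
  refine hs.cons_induction (fun α β v hc h => ?_) fun α w w' _ ih h => ?_
  · simp only [shufflesToFront_cons] at h ⊢
    rcases h with rfl | ⟨hα, rfl | ⟨hβ, h⟩⟩
    · exact Or.inr ⟨hc, Or.inl rfl⟩
    · exact Or.inl rfl
    · exact Or.inr ⟨hβ, Or.inr ⟨hα, h⟩⟩
  · exact h.imp_right fun h => ⟨h.1, ih h.2⟩

variable [DecidableEq Γ]

theorem ShufflesToFront.swapEquiv_cons_erase (h : ShufflesToFront adj γ w) :
    SwapEquiv adj (γ :: w.erase γ) w := by
  induction w with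
  | nil => exact (not_shufflesToFront_nil h).elim
  | cons δ w ih =>
    rcases h with rfl | ⟨hc, h⟩
    · simpa using .refl
    · rw [List.erase_cons_tail (by simpa using hc.1.symm)]
      exact .head ⟨[], _, γ, δ, hc, rfl, rfl⟩ ((ih h).cons δ)

theorem ShufflesToFront.erase (h : ShufflesToFront adj γ w) (hne : γ ≠ δ) :
    ShufflesToFront adj γ (w.erase δ) := by
  induction w with
  | nil => exact h
  | cons α w ih =>
    by_cases hα : α = δ
    · subst hα
      rw [List.erase_cons_head]
      exact h.resolve_left hne |>.2
    · rw [List.erase_cons_tail (by simpa using hα)]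
      exact h.imp_right fun h => ⟨h.1, ih h.2⟩

theorem ShufflesToFront.of_erase (h : ShufflesToFront adj δ (w.erase γ))
    (hc : RACommutes adj δ γ) : ShufflesToFront adj δ w := by
  induction w with
  | nil => exact h
  | cons α w ih =>
    by_cases hα : α = γ
    · subst hα
      rw [List.erase_cons_head] at h
      exact Or.inr ⟨hc, h⟩
    · rw [List.erase_cons_tail (by simpa using hα)] at h
      exact h.imp_right fun h => ⟨h.1, ih h.2⟩

theorem SwapStep.swapEquiv_erase (hs : SwapStep adj w w') (γ : Γ) :
    SwapEquiv adj (w.erase γ) (w'.erase γ) := by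
  refine hs.cons_induction (fun α β v hc => ?_) fun α w w' hs ih => ?_
  · by_cases hα : α = γ
    · subst hα
      simpa [List.erase_cons_tail (show ¬(β == α) by simpa using hc.1.symm)] using .refl
    by_cases hβ : β = γ
    · subst hβ
      simpa [List.erase_cons_tail (show ¬(α == β) by simpa using hc.1)] using .refl
    · simp only [List.erase_cons_tail (show ¬(α == γ) by simpa using hα),
        List.erase_cons_tail (show ¬(β == γ) by simpa using hβ)]
      exact .single ⟨[], _, α, β, hc, rfl, rfl⟩
  · by_cases hα : α = γ
    · subst hα
      simpa using .single hs
    · simpa [List.erase_cons_tail (show ¬(α == γ) by simpa using hα)] using ih.cons α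

end Shuffle

section Reduced

theorem gIsReduced_nil : GIsReduced adj ([] : List Γ) := by
  rintro ⟨u, v, x, γ, h, -⟩
  simp at h

theorem gIsReduced_cons :
    GIsReduced adj (γ :: w) ↔ ¬ ShufflesToFront adj γ w ∧ GIsReduced adj w := by
  simp only [GIsReduced, shufflesToFront_iff, ← not_or, not_iff_not]
  constructor
  · rintro ⟨_ | ⟨α, u⟩, v, x, δ, hw, hv⟩
    · obtain ⟨rfl, rfl⟩ := List.cons_eq_cons.mp hw
      exact Or.inl ⟨v, x, rfl, hv⟩
    · obtain ⟨rfl, rfl⟩ := List.cons_eq_cons.mp hw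
      exact Or.inr ⟨u, v, x, δ, rfl, hv⟩
  · rintro (⟨v, x, rfl, hv⟩ | ⟨u, v, x, δ, rfl, hv⟩)
    · exact ⟨[], v, x, γ, rfl, hv⟩
    · exact ⟨γ :: u, v, x, δ, rfl, hv⟩

theorem GIsReduced.of_cons (h : GIsReduced adj (γ :: w)) : GIsReduced adj w :=
  (gIsReduced_cons.mp h).2

theorem gIsReduced_pair (h : γ ≠ δ) : GIsReduced adj [γ, δ] :=
  gIsReduced_cons.mpr ⟨by simp [h], gIsReduced_cons.mpr ⟨id, gIsReduced_nil⟩⟩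

variable [DecidableEq Γ]

theorem GIsReduced.erase (hsym : Symmetric adj) (hw : GIsReduced adj w)
    (h : ShufflesToFront adj γ w) : GIsReduced adj (w.erase γ) := by
  induction w with
  | nil => exact hw
  | cons δ w ih =>
    rw [gIsReduced_cons] at hw
    rcases h with rfl | ⟨hc, h⟩
    · simpa using hw.2
    · rw [List.erase_cons_tail (by simpa using hc.1.symm), gIsReduced_cons]
      exact ⟨fun h' => hw.1 (h'.of_erase (hc.symm hsym)), ih hw.2 h⟩

theorem GIsReduced.not_shufflesToFront_erase (hw : GIsReduced adj w)
    (h : ShufflesToFront adj γ w) : ¬ ShufflesToFront adj γ (w.erase γ) := by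
  induction w with
  | nil => exact (not_shufflesToFront_nil h).elim
  | cons δ w ih =>
    rw [gIsReduced_cons] at hw
    rcases h with rfl | ⟨hc, h⟩
    · simpa using hw.1
    · rw [List.erase_cons_tail (by simpa using hc.1.symm)]
      rintro (h' | ⟨-, h'⟩)
      exacts [hc.1 h', ih hw.2 h h']

end Reduced

section Action

variable [DecidableEq Γ]

open Classical in
noncomputable def reducedCons (adj : Γ → Γ → Prop) (γ : Γ) (w : List Γ) : List Γ :=
  if ShufflesToFront adj γ w then w.erase γ else γ :: w

theorem reducedCons_of_shufflesToFront (h : ShufflesToFront adj γ w) :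
    reducedCons adj γ w = w.erase γ := if_pos h

theorem reducedCons_of_not_shufflesToFront (h : ¬ ShufflesToFront adj γ w) :
    reducedCons adj γ w = γ :: w := if_neg h

theorem evalWord_reducedCons :
    evalWord adj (reducedCons adj γ w) = PresentedGroup.of γ * evalWord adj w := by
  by_cases h : ShufflesToFront adj γ w
  · rw [reducedCons_of_shufflesToFront h, ← h.swapEquiv_cons_erase.evalWord_eq, evalWord_cons,
      ← mul_assoc, of_mul_of_self, one_mul]
  · rw [reducedCons_of_not_shufflesToFront h, evalWord_cons]

theorem length_reducedCons_le : (reducedCons adj γ w).length ≤ w.length + 1 := by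
  unfold reducedCons
  split_ifs
  · exact List.length_erase_le.trans (Nat.le_succ _)
  · rfl

theorem GIsReduced.reducedCons (hsym : Symmetric adj) (hw : GIsReduced adj w) :
    GIsReduced adj (reducedCons adj γ w) := by
  by_cases h : ShufflesToFront adj γ w
  · rw [reducedCons_of_shufflesToFront h]
    exact hw.erase hsym h
  · rw [reducedCons_of_not_shufflesToFront h]
    exact gIsReduced_cons.mpr ⟨h, hw⟩

theorem reducedCons_reducedCons (hw : GIsReduced adj w) :
    SwapEquiv adj (reducedCons adj γ (reducedCons adj γ w)) w := by
  by_cases h : ShufflesToFront adj γ w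
  · rw [reducedCons_of_shufflesToFront h,
      reducedCons_of_not_shufflesToFront (hw.not_shufflesToFront_erase h)]
    exact h.swapEquiv_cons_erase
  · rw [reducedCons_of_not_shufflesToFront h,
      reducedCons_of_shufflesToFront shufflesToFront_cons_self, List.erase_cons_head]

theorem reducedCons_comm_of_not_shufflesToFront (hsym : Symmetric adj)
    (hc : RACommutes adj γ δ) (hγ : ShufflesToFront adj γ w) (hδ : ¬ ShufflesToFront adj δ w) :
    reducedCons adj γ (reducedCons adj δ w) = reducedCons adj δ (reducedCons adj γ w) := by
  rw [reducedCons_of_not_shufflesToFront hδ,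
    reducedCons_of_shufflesToFront (shufflesToFront_cons.mpr (.inr ⟨hc, hγ⟩)),
    reducedCons_of_shufflesToFront hγ,
    reducedCons_of_not_shufflesToFront fun h => hδ (h.of_erase (hc.symm hsym)),
    List.erase_cons_tail (by simpa using hc.1.symm)]

theorem reducedCons_comm (hsym : Symmetric adj) (hc : RACommutes adj γ δ) (w : List Γ) :
    SwapEquiv adj (reducedCons adj γ (reducedCons adj δ w))
      (reducedCons adj δ (reducedCons adj γ w)) := by
  by_cases hγ : ShufflesToFront adj γ w <;> by_cases hδ : ShufflesToFront adj δ w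
  · rw [reducedCons_of_shufflesToFront hδ, reducedCons_of_shufflesToFront (hγ.erase hc.1),
      reducedCons_of_shufflesToFront hγ, reducedCons_of_shufflesToFront (hδ.erase hc.1.symm),
      List.erase_comm]
  · rw [reducedCons_comm_of_not_shufflesToFront hsym hc hγ hδ]
  · rw [reducedCons_comm_of_not_shufflesToFront hsym (hc.symm hsym) hδ hγ]
  · rw [reducedCons_of_not_shufflesToFront hγ, reducedCons_of_not_shufflesToFront hδ,
      reducedCons_of_not_shufflesToFront (by simp [hc.1, hγ]),
      reducedCons_of_not_shufflesToFront (by simp [hc.1.symm, hδ])]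
    exact .single ⟨[], w, γ, δ, hc, rfl, rfl⟩

theorem SwapStep.swapEquiv_reducedCons (hsym : Symmetric adj) (hs : SwapStep adj w w') (γ : Γ) :
    SwapEquiv adj (reducedCons adj γ w) (reducedCons adj γ w') := by
  by_cases h : ShufflesToFront adj γ w
  · rw [reducedCons_of_shufflesToFront h, reducedCons_of_shufflesToFront (h.swapStep hs)]
    exact hs.swapEquiv_erase γ
  · rw [reducedCons_of_not_shufflesToFront h,
      reducedCons_of_not_shufflesToFront fun h' => h (h'.swapStep (hs.symm hsym))]
    exact .single (hs.cons γ)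

theorem SwapEquiv.reducedCons (hsym : Symmetric adj) (h : SwapEquiv adj w w') (γ : Γ) :
    SwapEquiv adj (reducedCons adj γ w) (reducedCons adj γ w') :=
  Relation.ReflTransGen.rec .refl (fun _ hs ih => ih.trans (hs.swapEquiv_reducedCons hsym γ)) h

variable (adj) in
def reducedSetoid (hsym : Symmetric adj) : Setoid {w : List Γ // GIsReduced adj w} where
  r a b := SwapEquiv adj a.1 b.1
  iseqv := ⟨fun _ => .refl, fun h => h.symm hsym, .trans⟩

noncomputable def generatorPerm (hsym : Symmetric adj) (γ : Γ) :
    Equiv.Perm (Quotient (reducedSetoid adj hsym)) :=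
  Function.Involutive.toPerm
    (Quotient.map (fun a => ⟨reducedCons adj γ a.1, a.2.reducedCons hsym⟩)
      fun _ _ h => h.reducedCons hsym γ)
    (by rintro ⟨a⟩; exact Quotient.sound (reducedCons_reducedCons a.2))

theorem generatorPerm_mk (hsym : Symmetric adj) (γ : Γ) (a : {w : List Γ // GIsReduced adj w}) :
    generatorPerm hsym γ ⟦a⟧ = ⟦⟨reducedCons adj γ a.1, a.2.reducedCons hsym⟩⟧ := rfl

theorem generatorPerm_mul_self (hsym : Symmetric adj) (γ : Γ) :
    generatorPerm hsym γ * generatorPerm hsym γ = 1 := by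
  ext ⟨a⟩
  exact Quotient.sound (reducedCons_reducedCons a.2)

theorem generatorPerm_commute (hsym : Symmetric adj) (hc : RACommutes adj γ δ) :
    Commute (generatorPerm hsym γ) (generatorPerm hsym δ) := by
  ext ⟨a⟩
  exact Quotient.sound (reducedCons_comm hsym hc a.1)

noncomputable def wordAction (hsym : Symmetric adj) :
    PresentedGroup (coxRels adj) →* Equiv.Perm (Quotient (reducedSetoid adj hsym)) :=
  PresentedGroup.toGroup (f := generatorPerm hsym) <| by
    rintro r (⟨γ, rfl⟩ | ⟨γ, δ, hc, rfl⟩)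
    · simpa using generatorPerm_mul_self hsym γ
    · simp [(generatorPerm_commute hsym hc).eq]

theorem wordAction_evalWord (hsym : Symmetric adj) (hw : GIsReduced adj w) :
    wordAction hsym (evalWord adj w) ⟦⟨[], gIsReduced_nil⟩⟧ = ⟦⟨w, hw⟩⟧ := by
  induction w with
  | nil => rfl
  | cons γ w ih =>
    rw [evalWord_cons, map_mul, Equiv.Perm.mul_apply, ih hw.of_cons, wordAction,
      PresentedGroup.toGroup.of, generatorPerm_mk]
    apply Quotient.sound
    show SwapEquiv adj (reducedCons adj γ w) (γ :: w)
    rw [reducedCons_of_not_shufflesToFront (gIsReduced_cons.mp hw).1]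

end Action

section Length

theorem swapEquiv_of_evalWord_eq (hsym : Symmetric adj) (hw : GIsReduced adj w)
    (hw' : GIsReduced adj w') (he : evalWord adj w = evalWord adj w') : SwapEquiv adj w w' := by
  classical
  have h : (⟦⟨w, hw⟩⟧ : Quotient (reducedSetoid adj hsym)) = ⟦⟨w', hw'⟩⟧ := by
    rw [← wordAction_evalWord hsym hw, he, wordAction_evalWord hsym hw']
  exact Quotient.exact h

theorem exists_gIsReduced_evalWord_eq (hsym : Symmetric adj) (w : List Γ) :
    ∃ w', GIsReduced adj w' ∧ evalWord adj w' = evalWord adj w ∧ w'.length ≤ w.length := by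
  classical
  induction w with
  | nil => exact ⟨[], gIsReduced_nil, rfl, le_rfl⟩
  | cons γ w ih =>
    obtain ⟨w', hw', he, hl⟩ := ih
    refine ⟨reducedCons adj γ w', hw'.reducedCons hsym, ?_, ?_⟩
    · rw [evalWord_reducedCons, he, evalWord_cons]
    · exact length_reducedCons_le.trans (by simpa using hl)

theorem exists_shorter_evalWord_eq (h : ¬ GIsReduced adj w) :
    ∃ w', evalWord adj w' = evalWord adj w ∧ w'.length < w.length := by
  classical
  induction w with
  | nil => exact absurd gIsReduced_nil h
  | cons γ w ih =>
    rw [gIsReduced_cons, not_and_or, not_not] at h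
    rcases h with h | h
    · refine ⟨w.erase γ, ?_, ?_⟩
      · rw [evalWord_cons, ← h.swapEquiv_cons_erase.evalWord_eq, evalWord_cons, ← mul_assoc,
          of_mul_of_self, one_mul]
      · exact Nat.lt_succ_of_le List.length_erase_le
    · obtain ⟨w', he, hl⟩ := ih h
      exact ⟨γ :: w', by simp [he], by simpa using hl⟩

theorem gIsReduced_iff_length_le (hsym : Symmetric adj) :
    GIsReduced adj w ↔ ∀ w', evalWord adj w' = evalWord adj w → w.length ≤ w'.length := by
  refine ⟨fun hw w' he => ?_, fun h => by_contra fun hw => ?_⟩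
  · obtain ⟨w'', hw'', he'', hl⟩ := exists_gIsReduced_evalWord_eq hsym w'
    rw [(swapEquiv_of_evalWord_eq hsym hw hw'' (he''.trans he).symm).length_eq]
    exact hl
  · obtain ⟨w', he, hl⟩ := exists_shorter_evalWord_eq hw
    exact (h w' he).not_gt hl

theorem GIsReduced.length_eq (hsym : Symmetric adj) (hw : GIsReduced adj w)
    (hw' : GIsReduced adj w') (he : evalWord adj w = evalWord adj w') : w.length = w'.length :=
  ((gIsReduced_iff_length_le hsym).mp hw w' he.symm).antisymm
    ((gIsReduced_iff_length_le hsym).mp hw' w he)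

theorem GIsReduced.swapEquiv (hsym : Symmetric adj) (hw : GIsReduced adj w)
    (h : SwapEquiv adj w w') : GIsReduced adj w' :=
  (gIsReduced_iff_length_le hsym).mpr fun w'' he =>
    h.length_eq ▸ (gIsReduced_iff_length_le hsym).mp hw w'' (he.trans h.evalWord_eq.symm)

theorem GIsReduced.reverse (hsym : Symmetric adj) (hw : GIsReduced adj w) :
    GIsReduced adj w.reverse :=
  (gIsReduced_iff_length_le hsym).mpr fun w' he => by
    simpa using (gIsReduced_iff_length_le hsym).mp hw w'.reverse
      (by rw [evalWord_reverse, he, evalWord_reverse, inv_inv])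

theorem exists_swapEquiv_of_not_gIsReduced_append (hsym : Symmetric adj) (hu : GIsReduced adj u)
    (hv : GIsReduced adj v) (h : ¬ GIsReduced adj (u ++ v)) :
    ∃ γ u' v', SwapEquiv adj u (u' ++ [γ]) ∧ SwapEquiv adj v (γ :: v') := by
  classical
  induction u with
  | nil => exact absurd hv h
  | cons α u ih =>
    rw [gIsReduced_cons] at hu
    rw [List.cons_append, gIsReduced_cons, not_and_or, not_not] at h
    rcases h with h | h
    · rcases h.of_append with h | ⟨hα, h⟩
      · exact absurd h hu.1
      · exact ⟨α, u, v.erase α, swapEquiv_cons_concat hα, h.swapEquiv_cons_erase.symm hsym⟩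
    · obtain ⟨γ, u', v', h₁, h₂⟩ := ih hu.2 h
      exact ⟨γ, α :: u', v', h₁.cons α, h₂⟩

end Length

section Path

variable {rel : Γ → X → X → Prop} {x y : X}

variable (adj rel) in
def CommutingPathsSwap : Prop :=
  ∀ γ δ : Γ, RACommutes adj γ δ → ∀ x y : X, IsPath rel [γ, δ] x y → IsPath rel [δ, γ] x y

variable (adj rel) in
def NoClosedReducedPath : Prop :=
  ∀ (w : List Γ) (x : X), GIsReduced adj w → IsPath rel w x x → w = []

theorem isPath_append : IsPath rel (u ++ v) x y ↔ ∃ z, IsPath rel u x z ∧ IsPath rel v z y := by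
  induction u generalizing x with
  | nil => exact ⟨fun h => ⟨x, rfl, h⟩, fun ⟨_, hxz, h⟩ => hxz ▸ h⟩
  | cons γ u ih =>
    simp only [List.cons_append, IsPath, ih]
    exact ⟨fun ⟨z, hxz, hγ, t, hu, hv⟩ => ⟨t, ⟨z, hxz, hγ, hu⟩, hv⟩,
      fun ⟨t, ⟨z, hxz, hγ, hu⟩, hv⟩ => ⟨z, hxz, hγ, t, hu, hv⟩⟩

theorem IsPath.reverse (heq : ∀ γ, Equivalence (rel γ)) (h : IsPath rel w x y) :
    IsPath rel w.reverse y x := by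
  induction w generalizing x with
  | nil => exact (h : x = y).symm
  | cons γ w ih =>
    obtain ⟨z, hxz, hγ, hp⟩ := h
    rw [List.reverse_cons]
    exact isPath_append.mpr ⟨z, ih hp, x, hxz.symm, (heq γ).symm hγ, rfl⟩

theorem IsPath.swapStep (hcm : CommutingPathsSwap adj rel) (hs : SwapStep adj w w')
    (h : IsPath rel w x y) : IsPath rel w' x y := by
  obtain ⟨u, v, γ, δ, hc, rfl, rfl⟩ := hs
  obtain ⟨a, hu, b, hab, hγ, c, hbc, hδ, hv⟩ := isPath_append.mp h
  obtain ⟨b', hab', hδ', c', hbc', hγ', rfl⟩ := hcm γ δ hc a c ⟨b, hab, hγ, c, hbc, hδ, rfl⟩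
  exact isPath_append.mpr ⟨a, hu, b', hab', hδ', c', hbc', hγ', hv⟩

theorem IsPath.swapEquiv (hcm : CommutingPathsSwap adj rel) (h : SwapEquiv adj w w')
    (hp : IsPath rel w x y) : IsPath rel w' x y :=
  Relation.ReflTransGen.rec hp (fun _ hs ih => ih.swapStep hcm hs) h

theorem exists_gIsReduced_isPath (hsym : Symmetric adj) (heq : ∀ γ, Equivalence (rel γ))
    (hcm : CommutingPathsSwap adj rel) (h : IsPath rel w x y) :
    ∃ w', GIsReduced adj w' ∧ IsPath rel w' x y := by
  classical
  induction w generalizing x with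
  | nil => exact ⟨[], gIsReduced_nil, h⟩
  | cons γ w ih =>
    obtain ⟨z, hxz, hγ, hp⟩ := h
    obtain ⟨w', hw', hp'⟩ := ih hp
    by_cases hs : ShufflesToFront adj γ w'
    · have hw'γ := hs.swapEquiv_cons_erase.symm hsym
      obtain ⟨z', -, hγ', hp''⟩ := hp'.swapEquiv hcm hw'γ
      by_cases hx : x = z'
      · exact ⟨w'.erase γ, hw'.erase hsym hs, hx ▸ hp''⟩
      · exact ⟨γ :: w'.erase γ, hw'.swapEquiv hsym hw'γ, z', hx, (heq γ).trans hγ hγ', hp''⟩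
    · exact ⟨γ :: w', gIsReduced_cons.mpr ⟨hs, hw'⟩, z, hxz, hγ, hp'⟩

theorem eq_nil_or_exists_common_head (hsym : Symmetric adj) (heq : ∀ γ, Equivalence (rel γ))
    (hd : NoClosedReducedPath adj rel) (hw : GIsReduced adj w) (hw' : GIsReduced adj w')
    (hp : IsPath rel w x y) (hp' : IsPath rel w' x y) :
    w = [] ∧ w' = [] ∨ ∃ γ b b', SwapEquiv adj w (γ :: b) ∧ SwapEquiv adj w' (γ :: b') := by
  by_cases h : GIsReduced adj (w'.reverse ++ w)
  · have := hd _ y h (isPath_append.mpr ⟨x, hp'.reverse heq, hp⟩)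
    simp only [List.append_eq_nil_iff, List.reverse_eq_nil_iff] at this
    exact Or.inl this.symm
  · obtain ⟨γ, a, b, ha, hb⟩ :=
      exists_swapEquiv_of_not_gIsReduced_append hsym (hw'.reverse hsym) hw h
    exact Or.inr ⟨γ, b, a.reverse, hb, by simpa using ha.reverse hsym⟩

theorem evalWord_eq_of_isPath (hsym : Symmetric adj) (heq : ∀ γ, Equivalence (rel γ))
    (hcm : CommutingPathsSwap adj rel) (hd : NoClosedReducedPath adj rel)
    (hw : GIsReduced adj w) (hw' : GIsReduced adj w')
    (hp : IsPath rel w x y) (hp' : IsPath rel w' x y) : evalWord adj w = evalWord adj w' := by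
  induction hn : w.length + w'.length using Nat.strong_induction_on generalizing w w' x with
  | _ n ih =>
    rcases eq_nil_or_exists_common_head hsym heq hd hw hw' hp hp' with
      ⟨rfl, rfl⟩ | ⟨γ, b, b', hb, hb'⟩
    · rfl
    obtain ⟨z, -, hγ, hpb⟩ := hp.swapEquiv hcm hb
    obtain ⟨z', -, hγ', hpb'⟩ := hp'.swapEquiv hcm hb'
    have hγb := hw.swapEquiv hsym hb
    have hγb' := hw'.swapEquiv hsym hb'
    have hl := hb.length_eq
    have hl' := hb'.length_eq
    simp only [List.length_cons] at hl hl'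
    rw [hb.evalWord_eq, hb'.evalWord_eq, evalWord_cons, evalWord_cons]
    by_cases hz : z = z'
    · subst hz
      rw [ih _ (by omega) hγb.of_cons hγb'.of_cons hpb hpb' rfl]
    have hzz' : rel γ z z' := (heq γ).trans ((heq γ).symm hγ) hγ'
    have h₁ : b.length = b'.length + 1 := hγb.of_cons.length_eq hsym hγb' <|
      ih _ (by simp only [List.length_cons]; omega) hγb.of_cons hγb' hpb
        ⟨z', hz, hzz', hpb'⟩ rfl
    have h₂ : b'.length = b.length + 1 := hγb'.of_cons.length_eq hsym hγb <|
      ih _ (by simp only [List.length_cons]; omega) hγb'.of_cons hγb hpb'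
        ⟨z, Ne.symm hz, (heq γ).symm hzz', hpb⟩ rfl
    omega

end Path

section Building

variable {rel : Γ → X → X → Prop}

theorem IsBuilding.exists_isPath (hsym : Symmetric adj) (hB : IsBuilding adj rel) (x y : X) :
    ∃ w, IsPath rel w x y := by
  obtain ⟨g, hg⟩ := hB.2 x y
  obtain ⟨w, rfl⟩ := evalWord_surjective g
  obtain ⟨w', hw', he, -⟩ := exists_gIsReduced_evalWord_eq hsym w
  exact ⟨w', (hg w' hw').mpr he⟩

theorem IsBuilding.commutingPathsSwap (hB : IsBuilding adj rel) : CommutingPathsSwap adj rel := by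
  intro γ δ hc x y hp
  obtain ⟨g, hg⟩ := hB.2 x y
  have he : evalWord adj [δ, γ] = evalWord adj [γ, δ] := by simp [of_mul_of_comm hc]
  exact (hg _ (gIsReduced_pair hc.1.symm)).mpr (he.trans ((hg _ (gIsReduced_pair hc.1)).mp hp))

theorem IsBuilding.noClosedReducedPath (hsym : Symmetric adj) (hB : IsBuilding adj rel) :
    NoClosedReducedPath adj rel := by
  intro w x hw hp
  obtain ⟨g, hg⟩ := hB.2 x x
  have he : evalWord adj [] = evalWord adj w :=
    ((hg [] gIsReduced_nil).mp rfl).trans ((hg w hw).mp hp).symm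
  exact List.eq_nil_of_length_eq_zero <| Nat.le_zero.mp <|
    (gIsReduced_iff_length_le hsym).mp hw [] he

theorem isBuilding_of (hsym : Symmetric adj) (heq : ∀ γ, Equivalence (rel γ))
    (hthick : ∀ (γ : Γ) (x : X), ∃ y, y ≠ x ∧ rel γ x y) (hconn : ∀ x y : X, ∃ w, IsPath rel w x y)
    (hcm : CommutingPathsSwap adj rel) (hd : NoClosedReducedPath adj rel) :
    IsBuilding adj rel := by
  refine ⟨hthick, fun x y => ?_⟩
  obtain ⟨w, hp⟩ := hconn x y
  obtain ⟨w₀, hw₀, hp₀⟩ := exists_gIsReduced_isPath hsym heq hcm hp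
  refine ⟨evalWord adj w₀, fun w' hw' => ⟨fun hp' => ?_, fun he => ?_⟩⟩
  · exact evalWord_eq_of_isPath hsym heq hcm hd hw' hw₀ hp' hp₀
  · exact hp₀.swapEquiv hcm (swapEquiv_of_evalWord_eq hsym hw₀ hw' he.symm)

end Building

end

theorem building_iff_general
    (adj : Γ → Γ → Prop) (hsym : Symmetric adj)
    (rel : Γ → X → X → Prop) (heq : ∀ γ, Equivalence (rel γ)) :
    IsBuilding adj rel ↔
      ((∀ (γ : Γ) (x : X), ∃ y, y ≠ x ∧ rel γ x y) ∧
       (∀ x y : X, ∃ w : List Γ, IsPath rel w x y) ∧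
       (∀ γ δ : Γ, RACommutes adj γ δ →
         ∀ x y : X, IsPath rel [γ, δ] x y → IsPath rel [δ, γ] x y) ∧
       (∀ (w : List Γ) (x : X), GIsReduced adj w → IsPath rel w x x → w = [])) :=
  ⟨fun hB => ⟨hB.1, hB.exists_isPath hsym, hB.commutingPathsSwap, hB.noClosedReducedPath hsym⟩,
    fun ⟨hthick, hconn, hcm, hd⟩ => isBuilding_of hsym heq hthick hconn hcm hd⟩

/-- A chamber system over a right-angled Coxeter group is a building iff:
(a) every `∼_γ`-class has at least two elements; (b) any two chambers are
connected by a path; (c) for commuting generators `γ, δ`, chambers connected by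
a path of type `γδ` are connected by a path of type `δγ`; and (d) there is no
non-trivial closed reduced path. -/
theorem building_iff [Fintype Γ]
    (adj : Γ → Γ → Prop) (hsym : Symmetric adj) (hirr : Irreflexive adj)
    (rel : Γ → X → X → Prop) (heq : ∀ γ, Equivalence (rel γ)) :
    IsBuilding adj rel ↔
      ((∀ (γ : Γ) (x : X), ∃ y, y ≠ x ∧ rel γ x y) ∧
       (∀ x y : X, ∃ w : List Γ, IsPath rel w x y) ∧
       (∀ γ δ : Γ, RACommutes adj γ δ →
         ∀ x y : X, IsPath rel [γ, δ] x y → IsPath rel [δ, γ] x y) ∧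
       (∀ (w : List Γ) (x : X), GIsReduced adj w → IsPath rel w x x → w = [])) :=
  building_iff_general adj hsym rel heq
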